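/- arXiv:math/0702417 — 3 statements merged into one kernel-verified Lean document; each statement's English description precedes it below -/
import Mathlib

section
/- Let R = ℝ[x,y]/⟨x^2,y^2⟩ with ℤ/2 acting by swapping x and y, and adjoin a formal variable u. Then in R[u]/⟨u^2 - 2xy, u(x-y)⟩, the elements 1, x+y, u, xy, ux form an ℝ-basis of the ℤ/2-invariant subring. -/
open MvPolynomial
open TrivSqZeroExt
set_option synthInstance.maxHeartbeats 1000000
set_option maxHeartbeats 1000000


namespace Stmt8

/-- The ideal `⟨x², y², u² - 2xy, u(x-y)⟩` presenting
`H^*_{virt}((CP^1)², S₂; ℝ)`, with `x = X 0`, `y = X 1`, `u = X 2`. -/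
noncomputable def I : Ideal (MvPolynomial (Fin 3) ℝ) :=
  Ideal.span { (X 0 : MvPolynomial (Fin 3) ℝ) ^ 2, (X 1) ^ 2,
    (X 2) ^ 2 - 2 * (X 0 * X 1), X 2 * (X 0 - X 1) }

/-- The ring `R = ℝ[x,y,u]/⟨x², y², u² - 2xy, u(x-y)⟩`. -/
noncomputable abbrev R := MvPolynomial (Fin 3) ℝ ⧸ I

/-- The generator of the `ℤ/2` action on `R`: it swaps `x` and `y` and fixes
`u` (induced by the `S₂`-action on `H^*((CP^1)²;ℝ)[S₂]`). -/
noncomputable def σ : MvPolynomial (Fin 3) ℝ →ₐ[ℝ] R :=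
  (Ideal.Quotient.mkₐ ℝ I).comp (rename (Equiv.swap (0 : Fin 3) 1))

lemma σ_vanishes : ∀ a ∈ I, σ a = 0 := by
  intro a ha
  have h : I ≤ RingHom.ker σ.toRingHom := by
    unfold I
    rw [Ideal.span_le]
    rintro p hp
    simp only [Set.mem_insert_iff, Set.mem_singleton_iff] at hp
    rcases hp with h1 | h2 | h3 | h4
    · subst h1
      show σ _ = 0
      simp only [σ, AlgHom.comp_apply, map_pow, rename_X, Equiv.swap_apply_left]
      rw [← map_pow, Ideal.Quotient.mkₐ_eq_mk, Ideal.Quotient.eq_zero_iff_mem]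
      exact Ideal.subset_span (by simp)
    · subst h2
      show σ _ = 0
      simp only [σ, AlgHom.comp_apply, map_pow, rename_X, Equiv.swap_apply_right]
      rw [← map_pow, Ideal.Quotient.mkₐ_eq_mk, Ideal.Quotient.eq_zero_iff_mem]
      exact Ideal.subset_span (by simp)
    · subst h3
      show σ _ = 0
      have hsw : (Equiv.swap (0 : Fin 3) 1) 2 = 2 := by decide
      simp only [σ, AlgHom.comp_apply, map_sub, map_pow, map_mul, rename_X,
        Equiv.swap_apply_left, Equiv.swap_apply_right, hsw, map_ofNat,
        Ideal.Quotient.mkₐ_eq_mk]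
      have key : (Ideal.Quotient.mk I) (X 2) ^ 2 -
          2 * ((Ideal.Quotient.mk I) (X 1) * (Ideal.Quotient.mk I) (X 0)) =
          Ideal.Quotient.mk I (X 2 ^ 2 - 2 * (X 0 * X 1)) := by
        simp only [map_sub, map_mul, map_pow, map_ofNat]
        ring
      rw [key, Ideal.Quotient.eq_zero_iff_mem]
      exact Ideal.subset_span (by simp)
    · subst h4
      show σ _ = 0
      have hsw : (Equiv.swap (0 : Fin 3) 1) 2 = 2 := by decide
      simp only [σ, AlgHom.comp_apply, map_mul, map_sub, rename_X,
        Equiv.swap_apply_left, Equiv.swap_apply_right, hsw,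
        Ideal.Quotient.mkₐ_eq_mk]
      have key : (Ideal.Quotient.mk I) (X 2) * ((Ideal.Quotient.mk I) (X 1) -
          (Ideal.Quotient.mk I) (X 0)) =
          Ideal.Quotient.mk I (X 2 * (X 1 - X 0)) := by
        simp only [map_mul, map_sub]
      rw [key, show (X 2 : MvPolynomial (Fin 3) ℝ) * (X 1 - X 0) =
          -(X 2 * (X 0 - X 1)) by ring, map_neg, neg_eq_zero,
        Ideal.Quotient.eq_zero_iff_mem]
      exact Ideal.subset_span (by simp)
  exact h ha

/-- The induced `ℤ/2`-action (its generator) on `R`, swapping `x` and `y` and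
fixing `u`. -/
noncomputable def σbar : R →ₐ[ℝ] R :=
  Ideal.Quotient.liftₐ I σ σ_vanishes

noncomputable abbrev A := DualNumber (DualNumber ℝ)

noncomputable def aa : A := TrivSqZeroExt.inl DualNumber.eps
noncomputable def bb : A := DualNumber.eps

lemma aa_sq : aa * aa = 0 := by simp [aa, inl_mul_inl]
lemma bb_sq : bb * bb = 0 := by simp [bb]
lemma aa_bb : aa * bb = inr DualNumber.eps := by
  rw [aa, bb, show (DualNumber.eps : A) = inr (1 : DualNumber ℝ) from rfl,
    inl_mul_inr, smul_eq_mul, mul_one]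

lemma hI1 : ((X 0 : MvPolynomial (Fin 3) ℝ) ^ 2) ∈ I :=
  Ideal.subset_span (by simp)
lemma hI2 : ((X 1 : MvPolynomial (Fin 3) ℝ) ^ 2) ∈ I :=
  Ideal.subset_span (by simp)
lemma hI3 : ((X 2 : MvPolynomial (Fin 3) ℝ) ^ 2 - 2 * (X 0 * X 1)) ∈ I :=
  Ideal.subset_span (by simp)
lemma hI4 : ((X 2 : MvPolynomial (Fin 3) ℝ) * (X 0 - X 1)) ∈ I :=
  Ideal.subset_span (by simp)

noncomputable def φ₁ : MvPolynomial (Fin 3) ℝ →ₐ[ℝ] A := aeval ![aa, bb, aa + bb]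
noncomputable def φ₂ : MvPolynomial (Fin 3) ℝ →ₐ[ℝ] A := aeval ![aa, aa, bb]

lemma φ₁_vanishes : ∀ p ∈ I, φ₁ p = 0 := by
  intro p hp
  have h : I ≤ RingHom.ker φ₁.toRingHom := by
    rw [I, Ideal.span_le]
    rintro q hq
    simp only [Set.mem_insert_iff, Set.mem_singleton_iff] at hq
    rcases hq with rfl | rfl | rfl | rfl <;>
      · show φ₁ _ = 0
        simp only [φ₁, map_sub, map_mul, map_pow, map_ofNat, aeval_X,
          Matrix.cons_val_zero, Matrix.cons_val_one, Matrix.head_cons,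
          Matrix.cons_val_two, Matrix.tail_cons]
        first
        | rw [pow_two, aa_sq]
        | rw [pow_two, bb_sq]
        | (rw [show (aa + bb) ^ 2 - 2 * (aa * bb) = aa * aa + bb * bb by ring,
             aa_sq, bb_sq, add_zero])
        | (rw [show (aa + bb) * (aa - bb) = aa * aa - bb * bb by ring,
             aa_sq, bb_sq, sub_zero])
  exact h hp

lemma φ₂_vanishes : ∀ p ∈ I, φ₂ p = 0 := by
  intro p hp
  have h : I ≤ RingHom.ker φ₂.toRingHom := by
    rw [I, Ideal.span_le]
    rintro q hq
    simp only [Set.mem_insert_iff, Set.mem_singleton_iff] at hq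
    rcases hq with rfl | rfl | rfl | rfl <;>
      · show φ₂ _ = 0
        simp only [φ₂, map_sub, map_mul, map_pow, map_ofNat, aeval_X,
          Matrix.cons_val_zero, Matrix.cons_val_one, Matrix.head_cons,
          Matrix.cons_val_two, Matrix.tail_cons]
        first
        | (rw [show bb ^ 2 - 2 * (aa * aa) = bb * bb - 2 * (aa * aa) by ring,
             aa_sq, bb_sq]; ring)
        | (rw [pow_two, aa_sq]; done)
        | (rw [sub_self, mul_zero]; done)
  exact h hp

noncomputable def Φ₁ : R →ₐ[ℝ] A := Ideal.Quotient.liftₐ I φ₁ φ₁_vanishes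
noncomputable def Φ₂ : R →ₐ[ℝ] A := Ideal.Quotient.liftₐ I φ₂ φ₂_vanishes

lemma Φ₁_mk (p : MvPolynomial (Fin 3) ℝ) : Φ₁ (Ideal.Quotient.mk I p) = φ₁ p := by
  rw [Φ₁, Ideal.Quotient.liftₐ_apply]; rfl

lemma Φ₂_mk (p : MvPolynomial (Fin 3) ℝ) : Φ₂ (Ideal.Quotient.mk I p) = φ₂ p := by
  rw [Φ₂, Ideal.Quotient.liftₐ_apply]; rfl

lemma extract (c0 c1 c2 c3 : ℝ)
    (h : c0 • (1 : A) + c1 • aa + c2 • bb + c3 • inr DualNumber.eps = 0) :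
    c0 = 0 ∧ c1 = 0 ∧ c2 = 0 ∧ c3 = 0 := by
  rw [aa, bb, TrivSqZeroExt.ext_iff] at h
  simp only [fst_add, snd_add, fst_smul, snd_smul, fst_inl, snd_inl, fst_inr, snd_inr,
    fst_one, snd_one, fst_zero, snd_zero, smul_zero, add_zero, zero_add] at h
  obtain ⟨h1, h2⟩ := h
  rw [TrivSqZeroExt.ext_iff] at h1 h2
  simp only [DualNumber.eps, fst_add, snd_add, fst_smul, snd_smul, fst_inl, snd_inl,
    fst_inr, snd_inr, fst_one, snd_one, fst_zero, snd_zero, smul_zero, add_zero,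
    zero_add, smul_eq_mul, mul_one, mul_zero] at h1 h2
  exact ⟨h1.1, h1.2, h2.1, h2.2⟩


-- abbreviations
noncomputable def px : R := Ideal.Quotient.mk I (X 0)
noncomputable def py : R := Ideal.Quotient.mk I (X 1)
noncomputable def pu : R := Ideal.Quotient.mk I (X 2)

lemma Φ₁_px : Φ₁ px = aa := by
  rw [px, Φ₁_mk]; simp [φ₁]
lemma Φ₁_py : Φ₁ py = bb := by
  rw [py, Φ₁_mk]; simp [φ₁]
lemma Φ₁_pu : Φ₁ pu = aa + bb := by
  rw [pu, Φ₁_mk]; simp [φ₁]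
lemma Φ₂_px : Φ₂ px = aa := by
  rw [px, Φ₂_mk]; simp [φ₂]
lemma Φ₂_py : Φ₂ py = aa := by
  rw [py, Φ₂_mk]; simp [φ₂]
lemma Φ₂_pu : Φ₂ pu = bb := by
  rw [pu, Φ₂_mk]; simp [φ₂]

/-- linear independence of the six monomials 1, x, y, u, xy, ux in R. -/
lemma indep6 (c : Fin 6 → ℝ)
    (h : c 0 • (1 : R) + c 1 • px + c 2 • py + c 3 • pu
        + c 4 • (px * py) + c 5 • (pu * px) = 0) :
    ∀ i, c i = 0 := by
  have h1 := congrArg Φ₁ h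
  have h2 := congrArg Φ₂ h
  simp only [map_add, map_smul, map_mul, map_one, map_zero,
    Φ₁_px, Φ₁_py, Φ₁_pu, Φ₂_px, Φ₂_py, Φ₂_pu] at h1 h2
  rw [show (aa + bb) * aa = aa * aa + aa * bb by ring, aa_sq, zero_add, aa_bb] at h1
  rw [aa_sq, mul_comm bb aa, aa_bb, smul_zero] at h2
  have h1' : c 0 • (1 : A) + (c 1 + c 3) • aa + (c 2 + c 3) • bb
      + (c 4 + c 5) • inr DualNumber.eps = 0 := by rw [← h1]; module
  have h2' : c 0 • (1 : A) + (c 1 + c 2) • aa + c 3 • bb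
      + c 5 • inr DualNumber.eps = 0 := by rw [← h2]; module
  obtain ⟨e1, e2, e3, e4⟩ := extract _ _ _ _ h1'
  obtain ⟨f1, f2, f3, f4⟩ := extract _ _ _ _ h2'
  intro i
  fin_cases i <;> simp <;> linarith


lemma rel_xx : px * px = 0 := by
  rw [px, ← map_mul, Ideal.Quotient.eq_zero_iff_mem, ← pow_two]
  exact hI1

lemma rel_yy : py * py = 0 := by
  rw [py, ← map_mul, Ideal.Quotient.eq_zero_iff_mem, ← pow_two]
  exact hI2

lemma rel_uu : pu * pu = px * py + px * py := by
  rw [pu, px, py, ← map_mul, ← map_mul, ← map_add, Ideal.Quotient.mk_eq_mk_iff_sub_mem]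
  have : (X 2 : MvPolynomial (Fin 3) ℝ) * X 2 - (X 0 * X 1 + X 0 * X 1)
      = (X 2) ^ 2 - 2 * (X 0 * X 1) := by ring
  rw [this]; exact hI3

lemma rel_uy : pu * py = pu * px := by
  rw [pu, px, py, ← map_mul, ← map_mul, Ideal.Quotient.mk_eq_mk_iff_sub_mem]
  have : (X 2 : MvPolynomial (Fin 3) ℝ) * X 1 - X 2 * X 0
      = -(X 2 * (X 0 - X 1)) := by ring
  rw [this]; exact I.neg_mem hI4

lemma rel_xyu : px * py * pu = 0 := by
  rw [px, py, pu, ← map_mul, ← map_mul, Ideal.Quotient.eq_zero_iff_mem]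
  have : (X 0 : MvPolynomial (Fin 3) ℝ) * X 1 * X 2
      = X 1 * (X 2 * (X 0 - X 1)) + X 2 * (X 1) ^ 2 := by ring
  rw [this]
  exact add_mem (I.mul_mem_left _ hI4) (I.mul_mem_left _ hI2)

lemma rel_uxu : pu * px * pu = 0 := by
  rw [px, pu, ← map_mul, ← map_mul, Ideal.Quotient.eq_zero_iff_mem]
  have : (X 2 : MvPolynomial (Fin 3) ℝ) * X 0 * X 2
      = X 0 * ((X 2) ^ 2 - 2 * (X 0 * X 1)) + 2 * X 1 * (X 0) ^ 2 := by ring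
  rw [this]
  exact add_mem (I.mul_mem_left _ hI3) (I.mul_mem_left _ hI1)

noncomputable def B6 : Fin 6 → R := ![1, px, py, pu, px * py, pu * px]

lemma B6_0 : B6 0 = 1 := rfl
lemma B6_1 : B6 1 = px := rfl
lemma B6_2 : B6 2 = py := rfl
lemma B6_3 : B6 3 = pu := rfl
lemma B6_4 : B6 4 = px * py := rfl
lemma B6_5 : B6 5 = pu * px := rfl
lemma mkX0 : Ideal.Quotient.mk I (X 0) = px := rfl
lemma mkX1 : Ideal.Quotient.mk I (X 1) = py := rfl
lemma mkX2 : Ideal.Quotient.mk I (X 2) = pu := rfl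

lemma mul_X_mem (s : R) (hs : s ∈ Submodule.span ℝ (Set.range B6)) (i : Fin 3) :
    s * Ideal.Quotient.mk I (X i) ∈ Submodule.span ℝ (Set.range B6) := by
  set S := Submodule.span ℝ (Set.range B6) with hS
  have memB : ∀ j : Fin 6, B6 j ∈ S := fun j => Submodule.subset_span ⟨j, rfl⟩
  have m0 := memB 0; have m1 := memB 1; have m2 := memB 2
  have m3 := memB 3; have m4 := memB 4; have m5 := memB 5
  rw [B6_0] at m0; rw [B6_1] at m1; rw [B6_2] at m2
  rw [B6_3] at m3; rw [B6_4] at m4; rw [B6_5] at m5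
  induction hs using Submodule.span_induction with
  | mem t ht =>
    obtain ⟨j, rfl⟩ := ht
    fin_cases j <;> fin_cases i <;>
      simp only [Fin.zero_eta, Fin.mk_one, Fin.reduceFinMk, Fin.isValue,
        B6_0, B6_1, B6_2, B6_3, B6_4, B6_5, mkX0, mkX1, mkX2, one_mul]
    · exact m1
    · exact m2
    · exact m3
    · rw [show px * px = (0:R) from rel_xx]; exact S.zero_mem -- x*x
    · rw [show (px : R) * py = px * py from rfl]; exact m4 -- x*y
    · rw [show (px : R) * pu = pu * px from mul_comm _ _]; exact m5
    · rw [show (py : R) * px = px * py from mul_comm _ _]; exact m4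
    · rw [rel_yy]; exact S.zero_mem
    · rw [show (py : R) * pu = pu * px from (mul_comm _ _).trans rel_uy]; exact m5
    · rw [show (pu : R) * px = pu * px from rfl]; exact m5
    · rw [rel_uy]; exact m5
    · rw [rel_uu]; exact S.add_mem m4 m4
    · rw [show px * py * px = px * px * py by ring, rel_xx, zero_mul]; exact S.zero_mem
    · rw [show px * py * py = px * (py * py) by ring, rel_yy, mul_zero]; exact S.zero_mem
    · rw [rel_xyu]; exact S.zero_mem
    · rw [show pu * px * px = pu * (px * px) by ring, rel_xx, mul_zero]; exact S.zero_mem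
    · rw [show pu * px * py = px * py * pu by ring, rel_xyu]; exact S.zero_mem
    · rw [rel_uxu]; exact S.zero_mem
  | zero => rw [zero_mul]; exact S.zero_mem
  | add t1 t2 _ _ ih1 ih2 => rw [add_mul]; exact S.add_mem ih1 ih2
  | smul c t _ ih => rw [smul_mul_assoc]; exact S.smul_mem c ih

lemma span6_top : Submodule.span ℝ (Set.range B6) = ⊤ := by
  rw [eq_top_iff]
  rintro r -
  obtain ⟨p, rfl⟩ := Ideal.Quotient.mk_surjective r
  induction p using MvPolynomial.induction_on with
  | C a =>
    have : (Ideal.Quotient.mk I) (C a) = a • (1 : R) := by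
      rw [show (C a : MvPolynomial (Fin 3) ℝ) = a • 1 by
        rw [MvPolynomial.smul_eq_C_mul, mul_one]]
      exact map_smul (Ideal.Quotient.mkₐ ℝ I) a 1
    rw [this]
    exact Submodule.smul_mem _ a (Submodule.subset_span ⟨0, rfl⟩)
  | add p q hp hq => rw [map_add]; exact Submodule.add_mem _ hp hq
  | mul_X p i hp => rw [map_mul]; exact mul_X_mem _ hp i

lemma σbar_mk (p : MvPolynomial (Fin 3) ℝ) :
    σbar (Ideal.Quotient.mk I p)
      = Ideal.Quotient.mk I (rename (Equiv.swap (0 : Fin 3) 1) p) := by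
  rw [σbar, Ideal.Quotient.liftₐ_apply]
  rfl

lemma σbar_px : σbar px = py := by
  rw [px, σbar_mk, rename_X, Equiv.swap_apply_left, mkX1]

lemma σbar_py : σbar py = px := by
  rw [py, σbar_mk, rename_X, Equiv.swap_apply_right, mkX0]

lemma σbar_pu : σbar pu = pu := by
  rw [pu, σbar_mk, rename_X, show (Equiv.swap (0 : Fin 3) 1) 2 = 2 by decide, mkX2]

/-- In `R = ℝ[x,y,u]/⟨x², y², u² - 2xy, u(x-y)⟩` with the `ℤ/2`
action swapping `x` and `y` and fixing `u`, the elements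
`1, x+y, u, xy, ux` form an `ℝ`-basis of the `ℤ/2`-invariant subring: they are
linearly independent and their `ℝ`-span is exactly the invariant subring. -/
theorem stmt8 :
    LinearIndependent ℝ
      ![(1 : R),
        Ideal.Quotient.mk I (X 0) + Ideal.Quotient.mk I (X 1),
        Ideal.Quotient.mk I (X 2),
        Ideal.Quotient.mk I (X 0) * Ideal.Quotient.mk I (X 1),
        Ideal.Quotient.mk I (X 2) * Ideal.Quotient.mk I (X 0)] ∧
    Submodule.span ℝ
      (Set.range
        ![(1 : R),
          Ideal.Quotient.mk I (X 0) + Ideal.Quotient.mk I (X 1),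
          Ideal.Quotient.mk I (X 2),
          Ideal.Quotient.mk I (X 0) * Ideal.Quotient.mk I (X 1),
          Ideal.Quotient.mk I (X 2) * Ideal.Quotient.mk I (X 0)]) =
      Subalgebra.toSubmodule (AlgHom.equalizer σbar (AlgHom.id ℝ R)) := by
  constructor
  · rw [Fintype.linearIndependent_iff]
    intro g hg
    rw [Fin.sum_univ_five] at hg
    have hg' : g 0 • (1 : R) + g 1 • (px + py) + g 2 • pu
        + g 3 • (px * py) + g 4 • (pu * px) = 0 := hg
    have h6 := indep6 ![g 0, g 1, g 1, g 2, g 3, g 4] (by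
      show g 0 • (1 : R) + g 1 • px + g 1 • py + g 2 • pu
        + g 3 • (px * py) + g 4 • (pu * px) = 0
      rw [← hg']; module)
    intro i
    fin_cases i
    · exact h6 0
    · exact h6 1
    · exact h6 3
    · exact h6 4
    · exact h6 5
  · apply le_antisymm
    · rw [Submodule.span_le]
      rintro _ ⟨i, rfl⟩
      rw [SetLike.mem_coe, Subalgebra.mem_toSubmodule, AlgHom.mem_equalizer]
      fin_cases i
      · show σbar 1 = AlgHom.id ℝ R 1
        rw [map_one, map_one]
      · show σbar (px + py) = AlgHom.id ℝ R (px + py)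
        rw [map_add, σbar_px, σbar_py, AlgHom.id_apply, add_comm]
      · show σbar pu = AlgHom.id ℝ R pu
        rw [σbar_pu, AlgHom.id_apply]
      · show σbar (px * py) = AlgHom.id ℝ R (px * py)
        rw [map_mul, σbar_px, σbar_py, AlgHom.id_apply, mul_comm]
      · show σbar (pu * px) = AlgHom.id ℝ R (pu * px)
        rw [map_mul, σbar_pu, σbar_px, AlgHom.id_apply]
        exact rel_uy
    · intro r hr
      have hfix : σbar r = r := hr
      have hrm : r ∈ Submodule.span ℝ (Set.range B6) := by
        rw [span6_top]; trivial
      rw [Submodule.mem_span_range_iff_exists_fun] at hrm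
      obtain ⟨c, hc⟩ := hrm
      rw [Fin.sum_univ_six] at hc
      have hc' : c 0 • (1 : R) + c 1 • px + c 2 • py + c 3 • pu
          + c 4 • (px * py) + c 5 • (pu * px) = r := hc
      have heq := congrArg σbar hc'
      simp only [map_add, map_smul, map_mul, map_one, σbar_px, σbar_py, σbar_pu] at heq
      rw [hfix, mul_comm py px, rel_uy] at heq
      have h12 := indep6 ![0, c 1 - c 2, c 2 - c 1, 0, 0, 0] (by
        show (0:ℝ) • (1 : R) + (c 1 - c 2) • px + (c 2 - c 1) • py + (0:ℝ) • pu
          + (0:ℝ) • (px * py) + (0:ℝ) • (pu * px) = 0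
        linear_combination (norm := module) hc' - heq)
      have hc21 : c 2 = c 1 := by
        have h1 : c 1 - c 2 = 0 := h12 1
        linarith
      rw [Submodule.mem_span_range_iff_exists_fun]
      refine ⟨![c 0, c 1, c 3, c 4, c 5], ?_⟩
      rw [Fin.sum_univ_five]
      show c 0 • (1 : R) + c 1 • (px + py) + c 3 • pu
        + c 4 • (px * py) + c 5 • (pu * px) = r
      rw [hc21] at hc'
      rw [← hc']; module


end Stmt8
end

section
/- Suppose for each g in a finite group G we have an injective additive map f_{g!} : A_g → R into a commutative ring R satisfying the projection formula f_{g!}(a · f_g^*(b)) = f_{g!}(a)·b, where f_g^* : R → A_g is a surjective ring homomorphism and A_g is an R-algebra with unit 1_g. Then the image subring f(⊕_g A_g · g) ⊆ R[G] is generated by the set W = { b·1_G : b ∈ R } ∪ { (f_{g!}1_g)·g : g ∈ G }. -/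
/-!
The right-hand side is a subring of `R[G]`, closed under multiplication because the virtual
product sends `image f_{g!} × image f_{h!}` into `image f_{(gh)!}`; it contains `W` since `f_{1!}`
is surjective. Conversely, the projection formula and surjectivity
of `f_g^*` give `f_{g!} a = f_{g!} 1 · b` for some `b : R`, so every monomial with admissible
coefficient factors as `(f_{g!} 1 · g) (b · 1)`.
-/

namespace MonoidAlgebra

variable {R G : Type*} [Ring R] [Monoid G]

def coeffwiseSubring (S : G → AddSubgroup R) (one_mem : (1 : R) ∈ S 1)
    (mul_mem : ∀ {g h : G} {a b : R}, a ∈ S g → b ∈ S h → a * b ∈ S (g * h)) :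
    Subring (MonoidAlgebra R G) where
  carrier := {x | ∀ g, x.coeff g ∈ S g}
  zero_mem' _ := zero_mem _
  add_mem' hx hy g := add_mem (hx g) (hy g)
  neg_mem' hx g := neg_mem (hx g)
  one_mem' g := by
    classical
    rw [one_def, coeff_single, Finsupp.single_apply]
    split_ifs with h
    · exact h ▸ one_mem
    · exact zero_mem _
  mul_mem' {x y} hx hy g := by
    classical
    rw [coeff_mul]
    refine AddSubgroup.sum_mem _ fun g₁ _ => AddSubgroup.sum_mem _ fun g₂ _ => ?_
    dsimp only
    split_ifs with h
    · exact h ▸ mul_mem (hx g₁) (hy g₂)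
    · exact zero_mem _

variable {S : G → AddSubgroup R} {one_mem : (1 : R) ∈ S 1}
  {mul_mem : ∀ {g h : G} {a b : R}, a ∈ S g → b ∈ S h → a * b ∈ S (g * h)}

theorem single_mem_coeffwiseSubring {g : G} {c : R} :
    single g c ∈ coeffwiseSubring S one_mem mul_mem ↔ c ∈ S g := by
  classical
  refine ⟨fun h => by simpa using h g, fun hc g' => ?_⟩
  rw [coeff_single, Finsupp.single_apply]
  split_ifs with h
  · exact h ▸ hc
  · exact zero_mem _

theorem coeffwiseSubring_le {T : Subring (MonoidAlgebra R G)}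
    (hT : ∀ g, ∀ c ∈ S g, single g c ∈ T) : coeffwiseSubring S one_mem mul_mem ≤ T := by
  intro x hx
  rw [← x.sum_coeff_single]
  exact Subring.sum_mem _ fun g _ => hT g _ (hx g)

end MonoidAlgebra

theorem exists_eq_apply_one_mul_of_projection_formula {R A : Type*} [Semiring R] [Semiring A]
    {pull : R → A} (hpull : Function.Surjective pull) {push : A →+ R}
    (hproj : ∀ a b, push (a * pull b) = push a * b) (a : A) : ∃ b, push a = push 1 * b := by
  obtain ⟨b, rfl⟩ := hpull a
  exact ⟨b, by rw [← hproj, one_mul]⟩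

open MonoidAlgebra in
theorem stmt10_general (G : Type*) [Group G]
    (R : Type*) [CommRing R]
    (A : G → Type*) [∀ g, CommRing (A g)]
    (pull : ∀ g, R →+* A g)
    (hpull : ∀ g, Function.Surjective (pull g))
    (push : ∀ g, A g →+ R)
    (hproj : ∀ (g : G) (a : A g) (b : R), push g (a * pull g b) = push g a * b)
    (hmul : ∀ (g h : G) (a : A g) (b : A h),
      push g a * push h b ∈ Set.range (push (g * h)))
    (hone : Function.Surjective (push (1 : G))) :
    (Subring.closure
        ((Set.range fun b : R => MonoidAlgebra.single (1 : G) b) ∪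
          (Set.range fun g : G => MonoidAlgebra.single g (push g 1))) :
      Set (MonoidAlgebra R G)) =
    { x : MonoidAlgebra R G | ∀ g : G, x.coeff g ∈ Set.range (push g) } := by
  let T := coeffwiseSubring (fun g => (push g).range) (hone 1)
    (by rintro g h _ _ ⟨a, rfl⟩ ⟨b, rfl⟩; exact hmul g h a b)
  suffices Subring.closure _ = T from congrArg SetLike.coe this
  apply le_antisymm
  · rw [Subring.closure_le]
    rintro _ (⟨b, rfl⟩ | ⟨g, rfl⟩)
    · exact single_mem_coeffwiseSubring.2 (hone b)
    · exact single_mem_coeffwiseSubring.2 ⟨1, rfl⟩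
  · refine coeffwiseSubring_le fun g _ ⟨a, ha⟩ => ?_
    obtain ⟨b, hb⟩ := exists_eq_apply_one_mul_of_projection_formula (hpull g) (hproj g) a
    rw [← ha, hb, show single g (push g 1 * b) = single g (push g 1) * single 1 b by
      rw [single_mul_single, mul_one]]
    exact Subring.mul_mem _ (Subring.subset_closure (.inr ⟨g, rfl⟩))
      (Subring.subset_closure (.inl ⟨b, rfl⟩))

/-- Let `G` be a finite group, `R` a commutative ring, and for
each `g ∈ G` let `A g` be a commutative `R`-algebra (with unit `1_g`) whose
structure map `pull g = f_g^* : R → A g` is a surjective ring homomorphism,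
together with an injective additive map `push g = f_{g!} : A g → R` satisfying
the projection formula `f_{g!}(a · f_g^*(b)) = f_{g!}(a)·b`, and such that
`f_{g!}a · f_{h!}b ∈ image(f_{(gh)!})` (the virtual product), with
`f_{1_G !}` surjective (as `f_{1_G}` is the identity of `Y`).  Then the image
subring `f(⊕_g A_g·g) = { x ∈ R[G] : every coefficient x_g ∈ image(f_{g!}) }`
of the group ring `R[G]` is generated, as a subring, by the set
`W = { b·1_G : b ∈ R } ∪ { (f_{g!}1_g)·g : g ∈ G }`. -/
theorem stmt10 (G : Type*) [Group G] [Fintype G] [DecidableEq G]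
    (R : Type*) [CommRing R]
    (A : G → Type*) [∀ g, CommRing (A g)]
    (pull : ∀ g, R →+* A g)
    (hpull : ∀ g, Function.Surjective (pull g))
    (push : ∀ g, A g →+ R)
    (hinj : ∀ g, Function.Injective (push g))
    (hproj : ∀ (g : G) (a : A g) (b : R), push g (a * pull g b) = push g a * b)
    (hmul : ∀ (g h : G) (a : A g) (b : A h),
      push g a * push h b ∈ Set.range (push (g * h)))
    (hone : Function.Surjective (push (1 : G))) :
    (Subring.closure
        ((Set.range fun b : R => MonoidAlgebra.single (1 : G) b) ∪
          (Set.range fun g : G => MonoidAlgebra.single g (push g 1))) :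
      Set (MonoidAlgebra R G)) =
    { x : MonoidAlgebra R G | ∀ g : G, x.coeff g ∈ Set.range (push g) } :=
  stmt10_general G R A pull hpull push hproj hmul hone
end

section
/- In ℤ[x_1,...,x_k]/⟨x_1^{m+1},...,x_k^{m+1}⟩, the element D_k = ∑_{j_1+...+j_k = (k-1)m, 0 ≤ j_i ≤ m} x_1^{j_1}···x_k^{j_k} (the pushforward of 1 along the full diagonal CP^m → (CP^m)^k) equals the product ∏_{i=1}^{k-1} u_{i,i+1}, where u_{i,i+1} = ∑_{j=0}^m x_i^j x_{i+1}^{m-j}. -/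
open MvPolynomial


lemma sum_update_last {n m : ℕ} (d : Fin (n+1) → Fin (m+1)) (v : Fin (m+1)) :
    ∑ i, ((Function.update d (Fin.last n) v) i : ℕ)
      = (∑ i : Fin n, (d i.castSucc : ℕ)) + v := by
  rw [Fin.sum_univ_castSucc]
  congr 1
  · exact Finset.sum_congr rfl fun i _ => by
      rw [Function.update_of_ne (Fin.castSucc_lt_last i).ne]
  · rw [Function.update_self]

set_option maxHeartbeats 4000000 in
theorem key_stmt17 {R : Type*} [CommRing R] (m : ℕ) :
    ∀ (n : ℕ) (y : Fin (n + 1) → R), (∀ i, y i ^ (m + 1) = 0) →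
    (∑ d ∈ Finset.univ.filter
        (fun d : Fin (n + 1) → Fin (m + 1) => ∑ i, (d i : ℕ) = n * m),
      ∏ i, y i ^ (d i : ℕ))
    = ∏ i : Fin n, ∑ j ∈ Finset.range (m + 1), y i.castSucc ^ j * y i.succ ^ (m - j) := by
  intro n
  induction n with
  | zero =>
    intro y hy
    have h : (Finset.univ.filter
        (fun d : Fin 1 → Fin (m + 1) => ∑ i, (d i : ℕ) = 0 * m))
        = {fun _ => (0 : Fin (m + 1))} := by
      ext d
      simp [Fin.sum_univ_one, funext_iff, Fin.forall_fin_one, Fin.ext_iff, -Fin.val_eq_zero_iff]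
    rw [h]
    simp
  | succ n ih =>
    intro y hy
    have hy0 : ∀ (i : Fin (n + 2)) (a : ℕ), m + 1 ≤ a → y i ^ a = 0 := by
      intro i a ha
      rw [show a = (m + 1) + (a - (m + 1)) by omega, pow_add, hy, zero_mul]
    have hnm : (n + 1) * m = n * m + m := by ring
    rw [Fin.prod_univ_castSucc]
    simp only [Fin.succ_castSucc]
    rw [← ih (fun i => y i.castSucc) (fun i => hy _)]
    rw [Finset.sum_mul_sum, ← Finset.sum_product']
    set A := Finset.univ.filter
        (fun d : Fin (n + 1) → Fin (m + 1) => ∑ i, (d i : ℕ) = n * m) with hA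
    set P := A ×ˢ Finset.range (m + 1) with hP
    rw [← Finset.sum_filter_add_sum_filter_not P
      (fun p : (Fin (n + 1) → Fin (m + 1)) × ℕ => (p.1 (Fin.last n) : ℕ) + p.2 ≤ m)]
    have hzero : (∑ p ∈ P.filter
        (fun p : (Fin (n + 1) → Fin (m + 1)) × ℕ => ¬ ((p.1 (Fin.last n) : ℕ) + p.2 ≤ m)),
        (∏ i, y i.castSucc ^ (p.1 i : ℕ)) *
          (y (Fin.last n).castSucc ^ p.2 * y (Fin.last n).succ ^ (m - p.2))) = 0 := by
      apply Finset.sum_eq_zero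
      intro p hp
      simp only [Finset.mem_filter] at hp
      have hz := hy0 (Fin.last n).castSucc ((p.1 (Fin.last n) : ℕ) + p.2) (by omega)
      rw [Fin.prod_univ_castSucc]
      linear_combination ((∏ i : Fin n, y i.castSucc.castSucc ^ (p.1 i.castSucc : ℕ)) *
        y (Fin.last n).succ ^ (m - p.2)) * hz
    rw [hzero, add_zero]
    apply Finset.sum_nbij'
      (i := fun e : Fin (n + 2) → Fin (m + 1) =>
        (Function.update (fun i : Fin (n + 1) => e i.castSucc) (Fin.last n)
          (⟨min ((e (Fin.last n).castSucc : ℕ) + (e (Fin.last (n + 1)) : ℕ) - m) m,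
            by omega⟩ : Fin (m + 1)),
         m - (e (Fin.last (n + 1)) : ℕ)))
      (j := fun p : (Fin (n + 1) → Fin (m + 1)) × ℕ =>
        Fin.snoc (Function.update p.1 (Fin.last n)
          (⟨min ((p.1 (Fin.last n) : ℕ) + p.2) m, by omega⟩ : Fin (m + 1)))
          (⟨m - p.2, by omega⟩ : Fin (m + 1)))
    · -- hi
      intro e he
      simp only [Finset.mem_filter, Finset.mem_univ, true_and] at he
      rw [Fin.sum_univ_castSucc, Fin.sum_univ_castSucc
        (f := fun i : Fin (n + 1) => (e i.castSucc : ℕ))] at he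
      have hS : (∑ i : Fin n, (e i.castSucc.castSucc : ℕ)) ≤ n * m := by
        calc _ ≤ ∑ _i : Fin n, m := Finset.sum_le_sum fun i _ => Fin.is_le _
        _ = n * m := by simp [mul_comm]
      have ha := Fin.is_le (e (Fin.last n).castSucc)
      have hb := Fin.is_le (e (Fin.last (n + 1)))
      simp only [Finset.mem_filter, hP, Finset.mem_product, hA, Finset.mem_univ, true_and,
        Finset.mem_range]
      refine ⟨⟨?_, by omega⟩, ?_⟩
      · rw [sum_update_last (fun i : Fin (n+1) => e i.castSucc)]
        simp only [Fin.val_mk]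
        omega
      · simp only [Function.update_self, Fin.val_mk]
        omega
    · -- hj
      intro p hp
      simp only [Finset.mem_filter, hP, Finset.mem_product, hA, Finset.mem_univ, true_and,
        Finset.mem_range] at hp
      obtain ⟨⟨hsum, hjj⟩, hcond⟩ := hp
      rw [Fin.sum_univ_castSucc (f := fun i : Fin (n + 1) => (p.1 i : ℕ))] at hsum
      simp only [Finset.mem_filter, Finset.mem_univ, true_and]
      rw [Fin.sum_univ_castSucc]
      simp only [Fin.snoc_castSucc, Fin.snoc_last, Fin.val_mk]
      rw [sum_update_last]
      simp only [Fin.val_mk]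
      omega
    · -- left inverse
      intro e he
      simp only [Finset.mem_filter, Finset.mem_univ, true_and] at he
      rw [Fin.sum_univ_castSucc, Fin.sum_univ_castSucc
        (f := fun i : Fin (n + 1) => (e i.castSucc : ℕ))] at he
      have hS : (∑ i : Fin n, (e i.castSucc.castSucc : ℕ)) ≤ n * m := by
        calc _ ≤ ∑ _i : Fin n, m := Finset.sum_le_sum fun i _ => Fin.is_le _
        _ = n * m := by simp [mul_comm]
      have ha := Fin.is_le (e (Fin.last n).castSucc)
      have hb := Fin.is_le (e (Fin.last (n + 1)))
      funext i
      induction i using Fin.lastCases with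
      | last =>
        simp only [Fin.snoc_last]
        exact Fin.ext (by simp only [Fin.val_mk]; omega)
      | cast i =>
        simp only [Fin.snoc_castSucc]
        rcases eq_or_ne i (Fin.last n) with rfl | hne
        · rw [Function.update_self]
          refine Fin.ext ?_
          simp only [Fin.val_mk, Function.update_self]
          omega
        · rw [Function.update_of_ne hne, Function.update_of_ne hne]
    · -- right inverse
      intro p hp
      simp only [Finset.mem_filter, hP, Finset.mem_product, hA, Finset.mem_univ, true_and,
        Finset.mem_range] at hp
      obtain ⟨⟨hsum, hjj⟩, hcond⟩ := hp
      have hd := Fin.is_le (p.1 (Fin.last n))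
      refine Prod.ext ?_ ?_
      · rw [Function.update_eq_iff]
        refine ⟨?_, ?_⟩
        · refine Fin.ext ?_
          simp only [Fin.snoc_castSucc, Fin.snoc_last, Function.update_self, Fin.val_mk]
          omega
        · intro x hx
          simp only [Fin.snoc_castSucc]
          rw [Function.update_of_ne hx]
      · simp only [Fin.snoc_last, Fin.val_mk]
        omega
    · -- values agree
      intro e he
      simp only [Finset.mem_filter, Finset.mem_univ, true_and] at he
      rw [Fin.sum_univ_castSucc, Fin.sum_univ_castSucc
        (f := fun i : Fin (n + 1) => (e i.castSucc : ℕ))] at he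
      have hS : (∑ i : Fin n, (e i.castSucc.castSucc : ℕ)) ≤ n * m := by
        calc _ ≤ ∑ _i : Fin n, m := Finset.sum_le_sum fun i _ => Fin.is_le _
        _ = n * m := by simp [mul_comm]
      have ha := Fin.is_le (e (Fin.last n).castSucc)
      have hb := Fin.is_le (e (Fin.last (n + 1)))
      rw [Fin.prod_univ_castSucc,
        Fin.prod_univ_castSucc (f := fun i : Fin (n + 1) => y i.castSucc ^ (e i.castSucc : ℕ)),
        Fin.prod_univ_castSucc (f := fun i : Fin (n + 1) => y i.castSucc ^
          ((Function.update (fun i : Fin (n + 1) => e i.castSucc) (Fin.last n)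
            (⟨min ((e (Fin.last n).castSucc : ℕ) + (e (Fin.last (n + 1)) : ℕ) - m) m,
              by omega⟩ : Fin (m + 1)) i : ℕ)))]
      have hrest : ∀ i : Fin n,
          ((Function.update (fun i : Fin (n + 1) => e i.castSucc) (Fin.last n)
            (⟨min ((e (Fin.last n).castSucc : ℕ) + (e (Fin.last (n + 1)) : ℕ) - m) m,
              by omega⟩ : Fin (m + 1)) i.castSucc : ℕ)) = (e i.castSucc.castSucc : ℕ) :=
        fun i => by rw [Function.update_of_ne (Fin.castSucc_lt_last i).ne]
      simp only [hrest, Function.update_self, Fin.val_mk, Fin.succ_last]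
      have hmerge : y (Fin.last n).castSucc ^
            (min ((e (Fin.last n).castSucc : ℕ) + (e (Fin.last (n + 1)) : ℕ) - m) m) *
          y (Fin.last n).castSucc ^ (m - (e (Fin.last (n + 1)) : ℕ))
          = y (Fin.last n).castSucc ^ (e (Fin.last n).castSucc : ℕ) := by
        rw [← pow_add]; congr 1; omega
      have hexp : m - (m - (e (Fin.last (n + 1)) : ℕ)) = (e (Fin.last (n + 1)) : ℕ) := by omega
      rw [hexp]
      linear_combination (-((∏ i : Fin n, y i.castSucc.castSucc ^ (e i.castSucc.castSucc : ℕ)) *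
        y (Fin.last (n + 1)) ^ (e (Fin.last (n + 1)) : ℕ))) * hmerge

/-- In `ℤ[x₁,...,x_k]/⟨x₁^{m+1},...,x_k^{m+1}⟩`, the class
`D_k = ∑_{j₁+...+j_k = (k-1)m, 0 ≤ jᵢ ≤ m} x₁^{j₁}···x_k^{j_k}` of the small
diagonal `CP^m → (CP^m)^k` equals the product `∏_{i=1}^{k-1} u_{i,i+1}` of
the classes `u_{i,i+1} = ∑_{j=0}^m xᵢ^j x_{i+1}^{m-j}` of the consecutive
partial diagonals. -/
theorem stmt17 (k m : ℕ) (hk : 1 ≤ k)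
    (I : Ideal (MvPolynomial (Fin k) ℤ))
    (hI : I = Ideal.span ((fun i : Fin k => (X i : MvPolynomial (Fin k) ℤ) ^ (m + 1)) '' Set.univ))
    (u : Fin k → Fin k → (MvPolynomial (Fin k) ℤ ⧸ I))
    (hu : ∀ a b, u a b =
      ∑ j ∈ Finset.range (m + 1), Ideal.Quotient.mk I (X a ^ j * X b ^ (m - j)))
    (D : MvPolynomial (Fin k) ℤ ⧸ I)
    (hD : D = ∑ d ∈ Finset.univ.filter
        (fun d : Fin k → Fin (m + 1) => ∑ i, (d i : ℕ) = (k - 1) * m),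
      Ideal.Quotient.mk I (∏ i, X i ^ ((d i : ℕ)))) :
    D = ∏ i : Fin (k - 1),
      u ⟨(i : ℕ), by omega⟩ ⟨(i : ℕ) + 1, by omega⟩ := by
  obtain ⟨n, rfl⟩ := Nat.exists_eq_succ_of_ne_zero (Nat.one_le_iff_ne_zero.mp hk)
  set y : Fin (n + 1) → MvPolynomial (Fin (n + 1)) ℤ ⧸ I :=
    fun i => Ideal.Quotient.mk I (X i) with hy
  have hnil : ∀ i, y i ^ (m + 1) = 0 := by
    intro i
    rw [hy]
    rw [← map_pow, Ideal.Quotient.eq_zero_iff_mem, hI]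
    exact Ideal.subset_span ⟨i, Set.mem_univ i, rfl⟩
  have hkey := key_stmt17 m n y hnil
  have hDk : D = ∑ d ∈ Finset.univ.filter
      (fun d : Fin (n + 1) → Fin (m + 1) => ∑ i, (d i : ℕ) = n * m),
      ∏ i, y i ^ (d i : ℕ) := by
    rw [hD]
    apply Finset.sum_congr rfl
    intro d _
    rw [map_prod]
    simp [hy]
  rw [hDk, hkey]
  apply Finset.prod_congr rfl
  intro i _
  have h1 : (⟨(i : ℕ), by omega⟩ : Fin (n + 1)) = i.castSucc := rfl
  have h2 : (⟨(i : ℕ) + 1, by omega⟩ : Fin (n + 1)) = i.succ := rfl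
  rw [h1, h2, hu]
  apply Finset.sum_congr rfl
  intro j _
  rw [map_mul, map_pow, map_pow]
end
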